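/- arXiv:1907.09847 — 9 statements merged into one kernel-verified Lean document; each statement's English description precedes it below -/
import Mathlib

section
/- Let $q \equiv 3 \pmod 4$ be a prime and $r \in \mathbb{N}$. Then $2q^{r+1}$ is the largest positive integer $x$ with $\phi(x) = q^r(q-1)$. -/
/-!
Coprime factors `a, b > 2` of `x` each contribute a factor `2` to `φ x`. So when `φ x ≡ 2 mod 4`
and `φ x > 2`, `x` has a single odd prime factor `p` and `4 ∤ x`, i.e. `x = p ^ a` or
`x = 2 * p ^ a`, and in both cases `φ (p ^ a) = φ x`. For `q ≡ 3 mod 4` the value `q ^ r * (q - 1)` is `2 mod 4`, and a prime power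
`p ^ a` with the same totient as `q ^ (r + 1)` is either `q ^ (r + 1)` itself or, since then
`q ^ r ∣ p - 1`, the prime `p = q ^ r * (q - 1) + 1 < q ^ (r + 1)`.
-/

open Nat

namespace Nat

theorem four_dvd_totient_of_coprime_mul_dvd {a b n : ℕ} (hab : a.Coprime b) (ha : 2 < a)
    (hb : 2 < b) (h : a * b ∣ n) : 4 ∣ φ n := by
  have h4 : 2 * 2 ∣ φ (a * b) := by
    rw [totient_mul hab]
    exact mul_dvd_mul (totient_even ha).two_dvd (totient_even hb).two_dvd
  exact h4.trans (totient_dvd_of_dvd h)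

theorem exists_prime_pow_of_not_four_dvd_totient {n : ℕ} (h2 : 2 < φ n) (h4 : ¬ 4 ∣ φ n) :
    ∃ p a, p.Prime ∧ Odd p ∧ (n = p ^ a ∨ n = 2 * p ^ a) := by
  have hn : n ≠ 0 := by rintro rfl; simp at h2
  obtain ⟨k, m, hm, rfl⟩ := exists_eq_two_pow_mul_odd hn
  have hm1 : m ≠ 1 := by
    rintro rfl
    rcases k with _ | _ | _ | k
    · simp at h2
    · simp at h2
    · rw [mul_one, totient_prime_pow_succ prime_two] at h2
      simp at h2
    · rw [mul_one, totient_prime_pow_succ prime_two] at h4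
      exact h4 (dvd_mul_of_dvd_left (pow_dvd_pow 2 (by omega : 2 ≤ k + 2)) _)
  obtain ⟨p, hp, hpm⟩ := exists_prime_and_dvd hm1
  have hp_odd : Odd p := hm.of_dvd_nat hpm
  obtain ⟨e, c, hpc, hmc⟩ := exists_eq_pow_mul_and_not_dvd hm.pos.ne' p hp.one_lt.ne'
  have hc : c = 1 := by
    by_contra hc1
    have he : e ≠ 0 := by rintro rfl; rw [pow_zero, one_mul] at hmc; exact hpc (hmc ▸ hpm)
    have hc_odd : Odd c := (odd_mul.1 (hmc ▸ hm)).2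
    have hc2 : 2 < c := by have := hc_odd.pos; have := odd_iff.1 hc_odd; omega
    have hpe : 2 < p ^ e := 
      (hp.two_le.lt_of_ne' (hp_odd.ne_two_of_dvd_nat dvd_rfl)).trans_le (le_self_pow he p)
    exact h4 (four_dvd_totient_of_coprime_mul_dvd
      (((Prime.coprime_iff_not_dvd hp).2 hpc).pow_left e) hpe hc2 (hmc ▸ dvd_mul_left m _))
  have hk : k ≤ 1 := by
    by_contra hk
    have hm2 : 2 < m := by have := hm.pos; have := odd_iff.1 hm; omega
    exact h4 (four_dvd_totient_of_coprime_mul_dvd ((coprime_two_left.2 hm).pow_left 2)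
      (by norm_num) hm2 (mul_dvd_mul_right (pow_dvd_pow 2 (by omega : 2 ≤ k)) m))
  rw [hc, mul_one] at hmc
  subst hmc
  refine ⟨p, e, hp, hp_odd, ?_⟩
  interval_cases k <;> simp

theorem prime_pow_le_of_totient_eq {p q a b : ℕ} (hp : p.Prime) (hq : q.Prime) (hb : 2 ≤ b)
    (h : φ (p ^ a) = φ (q ^ b)) : p ^ a ≤ q ^ b := by
  obtain _ | a := a
  · simpa using one_le_pow _ _ hq.pos
  obtain ⟨b, rfl⟩ : ∃ c, b = c + 1 := ⟨b - 1, by omega⟩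
  rw [totient_prime_pow_succ hp, totient_prime_pow_succ hq] at h
  have hp1 : 0 < p - 1 := Nat.sub_pos_of_lt hp.one_lt
  rcases eq_or_ne p q with rfl | hpq
  · rw [Nat.pow_right_injective hp.two_le (Nat.eq_of_mul_eq_mul_right hp1 h)]
  have hqp : q ^ b ∣ p - 1 :=
    (((coprime_primes hq hp).2 hpq.symm).pow b a).dvd_of_dvd_mul_left (h ▸ dvd_mul_right _ _)
  have hqb : q ^ b ≤ p - 1 := le_of_dvd hp1 hqp
  have hpa : p ^ a ≤ q - 1 := by
    refine le_of_mul_le_mul_right (h ▸ ?_ : p ^ a * (p - 1) ≤ (q - 1) * (p - 1)) hp1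
    rw [mul_comm (q - 1)]
    exact Nat.mul_le_mul_right _ hqb
  -- `p ^ a ≤ q - 1 < q ≤ q ^ b < p`
  obtain rfl : a = 0 := by
    by_contra ha
    have := le_self_pow ha p
    have := le_self_pow (show b ≠ 0 by omega) q
    omega
  have := one_le_pow b q hq.pos
  have := Nat.le_mul_of_pos_right (q ^ b) hq.pos
  rw [pow_zero, one_mul, Nat.mul_sub_one] at h
  rw [zero_add, pow_one, pow_succ]
  omega

end Nat

theorem N2_eq_two_q_pow (q r : ℕ) (hq : q.Prime) (hmod : q % 4 = 3) (hr : 1 ≤ r) :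
    IsGreatest {x : ℕ | 0 < x ∧ Nat.totient x = q ^ r * (q - 1)} (2 * q ^ (r + 1)) := by
  have hq_odd : Odd q := odd_iff.2 (by omega)
  have htot : φ (q ^ (r + 1)) = q ^ r * (q - 1) := totient_prime_pow_succ hq r
  refine ⟨⟨by have := hq.pos; positivity, totient_two_mul_of_odd hq_odd.pow ▸ htot⟩, ?_⟩
  rintro x ⟨-, hx⟩
  have h2 : 2 < q ^ r * (q - 1) :=
    calc 2 < q * 1 := by omega
      _ ≤ q ^ r * (q - 1) := Nat.mul_le_mul (le_self_pow (by omega) q) (by omega)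
  have h4 : ¬ 4 ∣ q ^ r * (q - 1) := by
    have := odd_iff.1 (hq_odd.pow (n := r))
    rw [dvd_iff_mod_eq_zero, mul_mod, show (q - 1) % 4 = 2 by omega]
    omega
  have hle {p a : ℕ} (hp : p.Prime) (hpx : φ (p ^ a) = φ x) : p ^ a ≤ q ^ (r + 1) :=
    prime_pow_le_of_totient_eq hp hq (by omega) (hpx.trans (hx.trans htot.symm))
  obtain ⟨p, a, hp, hp_odd, rfl | rfl⟩ :=
    exists_prime_pow_of_not_four_dvd_totient (hx ▸ h2) (hx ▸ h4)
  · have := hle hp rfl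
    omega
  · have := hle hp (totient_two_mul_of_odd hp_odd.pow).symm
    omega
end

section
/- Let $q \equiv 3 \pmod 4$ be a prime and $r \in \mathbb{N}$. If $q^r(q-1)+1$ is prime, then $q^r(q-1)+1$ is the smallest positive integer $x$ with $\phi(x) = q^r(q-1)$; otherwise $q^{r+1}$ is the smallest such $x$. -/
open Nat

lemma aux_lower (q r : ℕ) (hq : q.Prime) (hmod : q % 4 = 3) (hr : 1 ≤ r)
    (hnp : ¬ Nat.Prime (q ^ r * (q - 1) + 1)) (x : ℕ) (hx0 : 0 < x)
    (hx : Nat.totient x = q ^ r * (q - 1)) : q ^ (r + 1) ≤ x := by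
  set n := q ^ r * (q - 1) with hn
  have hq3 : 3 ≤ q := by have := hq.two_le; omega
  -- n % 4 = 2
  have hqr4 : q ^ r % 4 = 1 ∨ q ^ r % 4 = 3 := by
    rcases Nat.even_or_odd r with ⟨k, hk⟩ | ⟨k, hk⟩
    · left; subst hk
      have h : q ^ (k + k) = (q ^ 2) ^ k := by ring
      rw [h, Nat.pow_mod, Nat.pow_mod q, hmod]
      norm_num [Nat.pow_mod]
    · right; subst hk
      have h : q ^ (2 * k + 1) = (q ^ 2) ^ k * q := by ring
      rw [h, Nat.mul_mod, Nat.pow_mod, Nat.pow_mod q, hmod]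
      norm_num [Nat.pow_mod]
  have hn4 : n % 4 = 2 := by
    rw [hn, Nat.mul_mod]
    have h1 : (q - 1) % 4 = 2 := by omega
    rw [h1]; omega
  have h4n : ¬ (4 ∣ n) := by omega
  have hqn : q ∣ n := Dvd.dvd.mul_right (dvd_pow_self q (by omega)) _
  have hx1 : x ≠ 1 := by
    rintro rfl
    rw [Nat.totient_one] at hx
    omega
  set m := ordCompl[2] x with hm
  have hxne : x ≠ 0 := hx0.ne'
  have h2m : ¬ (2 ∣ m) := Nat.not_dvd_ordCompl Nat.prime_two hxne
  have hm0 : m ≠ 0 := (Nat.ordCompl_pos 2 hxne).ne'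
  have hx_eq : 2 ^ (x.factorization 2) * m = x := Nat.ordProj_mul_ordCompl_eq_self x 2
  have hmx : m ∣ x := Nat.ordCompl_dvd x 2
  -- m ≠ 1
  have hm1 : m ≠ 1 := by
    rintro h1
    rw [h1, mul_one] at hx_eq
    obtain ⟨s, hxs⟩ : ∃ s, x = 2 ^ s := ⟨_, hx_eq.symm⟩
    have hs1 : 1 ≤ s := by
      rcases Nat.eq_zero_or_pos s with h | h
      · rw [h, pow_zero] at hxs; exact absurd hxs hx1
      · exact h
    have hq2' : q ∣ 2 ^ (s - 1) := by
      have htot : Nat.totient x = 2 ^ (s - 1) := by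
        rw [hxs, Nat.totient_prime_pow Nat.prime_two hs1]
        simp
      rw [htot] at hx
      rw [← hx] at hqn
      exact hqn
    have := (Nat.prime_dvd_prime_iff_eq hq Nat.prime_two).mp (hq.dvd_of_dvd_pow hq2')
    omega
  set p := m.minFac with hpdef
  have hp : p.Prime := Nat.minFac_prime hm1
  have hpm : p ∣ m := Nat.minFac_dvd m
  have hpx : p ∣ x := hpm.trans hmx
  have hp2 : p ≠ 2 := fun h => h2m (h ▸ hpm)
  -- every prime dividing x is 2 or p
  have huniq : ∀ d : ℕ, d.Prime → d ∣ x → d = 2 ∨ d = p := by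
    intro d hd hdx
    by_contra hcon
    push_neg at hcon
    obtain ⟨hd2, hdp⟩ := hcon
    have hcop : Nat.Coprime d p := (Nat.coprime_primes hd hp).mpr hdp
    have hdpx : d * p ∣ x := hcop.mul_dvd_of_dvd_of_dvd hdx hpx
    have htot : Nat.totient (d * p) = (d - 1) * (p - 1) := by
      rw [Nat.totient_mul hcop, Nat.totient_prime hd, Nat.totient_prime hp]
    have hdvd : (d - 1) * (p - 1) ∣ n := by
      rw [← htot, ← hx]
      exact Nat.totient_dvd_of_dvd hdpx
    have hde : 2 ∣ d - 1 := by
      have := hd.two_le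
      rcases hd.eq_two_or_odd with h | h
      · exact absurd h hd2
      · omega
    have hpe : 2 ∣ p - 1 := by
      have := hp.two_le
      rcases hp.eq_two_or_odd with h | h
      · exact absurd h hp2
      · omega
    exact h4n (by
      obtain ⟨a, ha⟩ := hde
      obtain ⟨b, hb⟩ := hpe
      exact Dvd.dvd.trans ⟨a * b, by rw [ha, hb]; ring⟩ hdvd)
  -- 4 does not divide x
  have h4x : ¬ (4 ∣ x) := by
    intro h4
    have hcop : Nat.Coprime 4 p := by
      have : Nat.Coprime 2 p := (Nat.coprime_primes Nat.prime_two hp).mpr (Ne.symm hp2)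
      exact (this.pow_left 2 : Nat.Coprime (2 ^ 2) p)
    have h4px : 4 * p ∣ x := hcop.mul_dvd_of_dvd_of_dvd h4 hpx
    have htot : Nat.totient (4 * p) = 2 * (p - 1) := by
      rw [Nat.totient_mul hcop, Nat.totient_prime hp,
        show Nat.totient 4 = 2 by decide]
    have hdvd : 2 * (p - 1) ∣ n := by
      rw [← htot, ← hx]
      exact Nat.totient_dvd_of_dvd h4px
    have hpe : 2 ∣ p - 1 := by
      have := hp.two_le
      rcases hp.eq_two_or_odd with h | h
      · exact absurd h hp2
      · omega
    exact h4n (by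
      obtain ⟨b, hb⟩ := hpe
      exact Dvd.dvd.trans ⟨b, by rw [hb]; ring⟩ hdvd)
  -- m is a power of p
  set k := m.primeFactorsList.length with hk
  have hmpk : m = p ^ k := Nat.eq_prime_pow_of_unique_prime_dvd hm0 (by
    intro d hd hdm
    rcases huniq d hd (hdm.trans hmx) with h | h
    · exact absurd (h ▸ hdm) h2m
    · exact h)
  have hk1 : 1 ≤ k := by
    rcases Nat.eq_zero_or_pos k with h | h
    · rw [h, pow_zero] at hmpk; exact absurd hmpk hm1
    · exact h
  -- the 2-exponent s is ≤ 1
  have hs1 : x.factorization 2 ≤ 1 := by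
    by_contra h
    push_neg at h
    exact h4x (dvd_trans (by exact pow_dvd_pow 2 h : (2:ℕ)^2 ∣ 2 ^ (x.factorization 2))
      (Nat.ordProj_dvd x 2))
  -- compute totient
  have hcop2m : Nat.Coprime (2 ^ (x.factorization 2)) m :=
    Nat.Coprime.pow_left _ ((Nat.Prime.coprime_iff_not_dvd Nat.prime_two).mpr h2m)
  obtain ⟨s, hsle, hxs⟩ : ∃ s, s ≤ 1 ∧ x = 2 ^ s * m := ⟨_, hs1, hx_eq.symm⟩
  have htotx : Nat.totient x = p ^ (k - 1) * (p - 1) := by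
    have hcop' : Nat.Coprime (2 ^ s) m :=
      Nat.Coprime.pow_left _ ((Nat.Prime.coprime_iff_not_dvd Nat.prime_two).mpr h2m)
    rw [hxs, Nat.totient_mul hcop', hmpk, Nat.totient_prime_pow hp hk1]
    interval_cases s <;> simp
  rw [hx] at htotx
  -- rule out k = 1
  have hk2 : 2 ≤ k := by
    rcases Nat.lt_or_ge k 2 with h | h
    · have hk1' : k = 1 := by omega
      rw [hk1', Nat.sub_self, pow_zero, one_mul] at htotx
      have hpprime : (n + 1).Prime := by
        have : p = n + 1 := by have := hp.two_le; omega
        exact this ▸ hp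
      exact absurd hpprime hnp
    · exact h
  -- p = q
  have hpq : p = q := by
    by_contra hne
    have hqd : q ∣ p ^ (k - 1) * (p - 1) := htotx ▸ hqn
    have hq_p1 : q ∣ p - 1 := by
      rcases (Nat.Prime.dvd_mul hq).mp hqd with h | h
      · exact absurd ((Nat.prime_dvd_prime_iff_eq hq hp).mp (hq.dvd_of_dvd_pow h)).symm hne
      · exact h
    have hpd : p ∣ q ^ r * (q - 1) := by
      have : p ∣ n := by
        rw [htotx]
        exact dvd_mul_of_dvd_left (dvd_pow_self p (by omega)) _
      rwa [hn] at this
    have hp_q1 : p ∣ q - 1 := by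
      rcases (Nat.Prime.dvd_mul hp).mp hpd with h | h
      · exact absurd ((Nat.prime_dvd_prime_iff_eq hp hq).mp (hp.dvd_of_dvd_pow h)) hne
      · exact h
    have h1 : q ≤ p - 1 := Nat.le_of_dvd (by have := hp.two_le; omega) hq_p1
    have h2 : p ≤ q - 1 := Nat.le_of_dvd (by omega) hp_q1
    omega
  -- k = r + 1
  subst hpq
  have hkr : k - 1 = r := by
    have hcancel : p ^ (k - 1) = p ^ r :=
      Nat.eq_of_mul_eq_mul_right (by omega) (htotx.symm)
    exact Nat.pow_right_injective hp.two_le hcancel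
  have hkr' : k = r + 1 := by omega
  -- conclude
  have : p ^ (r + 1) ∣ x := hkr' ▸ hmpk ▸ hmx
  exact Nat.le_of_dvd hx0 this

theorem N3_eq_k_q_r (q r : ℕ) (hq : q.Prime) (hmod : q % 4 = 3) (hr : 1 ≤ r) :
    (Nat.Prime (q ^ r * (q - 1) + 1) →
      IsLeast {x : ℕ | 0 < x ∧ Nat.totient x = q ^ r * (q - 1)} (q ^ r * (q - 1) + 1)) ∧
    (¬ Nat.Prime (q ^ r * (q - 1) + 1) →
      IsLeast {x : ℕ | 0 < x ∧ Nat.totient x = q ^ r * (q - 1)} (q ^ (r + 1))) := by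
  have hq3 : 3 ≤ q := by have := hq.two_le; omega
  constructor
  · intro hp
    constructor
    · refine ⟨by positivity, ?_⟩
      rw [Nat.totient_prime hp]
      simp
    · rintro x ⟨hx0, hx⟩
      have hn2 : 4 ≤ q ^ r * (q - 1) := by
        have h1 : 2 ≤ q ^ r := le_trans (by omega) (Nat.le_self_pow (by omega) q)
        have h2 := Nat.mul_le_mul h1 (show 2 ≤ q - 1 by omega)
        omega
      rcases Nat.lt_or_ge x 2 with h | h
      · interval_cases x
        rw [Nat.totient_one] at hx
        omega
      · have := Nat.totient_lt x h
        omega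
  · intro hnp
    constructor
    · refine ⟨by positivity, ?_⟩
      rw [Nat.totient_prime_pow hq (by omega : 0 < r + 1)]
      simp
    · rintro x ⟨hx0, hx⟩
      exact aux_lower q r hq hmod hr hnp x hx0 hx
end

section
/- For every prime $q > 7$ and every $r \geq 1$, the number $2q^r$ is not a sparsely totient number: there exists $n > 2q^r$ with $\phi(n) \leq \phi(2q^r)$. -/
lemma totient_six_mul_le (k : ℕ) : Nat.totient (6 * k) ≤ 2 * k := by
  induction k using Nat.strong_induction_on with
  | _ k ih =>
    rcases Nat.eq_zero_or_pos k with rfl | hk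
    · simp
    by_cases h2 : 2 ∣ k
    · obtain ⟨k', rfl⟩ := h2
      have hk' : k' < 2 * k' := by omega
      have h : (6 : ℕ) * (2 * k') = 2 * (6 * k') := by ring
      rw [h, Nat.totient_mul_of_prime_of_dvd Nat.prime_two ⟨3 * k', by ring⟩]
      have := ih k' hk'
      omega
    by_cases h3 : 3 ∣ k
    · obtain ⟨k', rfl⟩ := h3
      have hk' : k' < 3 * k' := by omega
      have h : (6 : ℕ) * (3 * k') = 3 * (6 * k') := by ring
      rw [h, Nat.totient_mul_of_prime_of_dvd Nat.prime_three ⟨2 * k', by ring⟩]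
      have := ih k' hk'
      omega
    · have c2 : Nat.Coprime 2 k := (Nat.Prime.coprime_iff_not_dvd Nat.prime_two).mpr h2
      have c3 : Nat.Coprime 3 k := (Nat.Prime.coprime_iff_not_dvd Nat.prime_three).mpr h3
      have hcop : Nat.Coprime 6 k := by
        have := Nat.Coprime.mul c2 c3
        norm_num at this
        exact this
      rw [Nat.totient_mul hcop]
      have h6 : Nat.totient 6 = 2 := by decide
      have := Nat.totient_le k
      rw [h6]
      omega

theorem two_q_pow_not_sparsely_totient (q r : ℕ) (hq : q.Prime) (hq7 : 7 < q) (hr : 1 ≤ r) :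
    ∃ n : ℕ, 2 * q ^ r < n ∧ Nat.totient n ≤ Nat.totient (2 * q ^ r) := by
  have hq11 : 11 ≤ q := by
    rcases Nat.lt_or_ge q 11 with h | h
    · interval_cases q <;> simp_all <;> norm_num at hq
    · exact h
  set x := 2 * q ^ r with hx
  refine ⟨6 * (x / 6 + 1), ?_, ?_⟩
  · have := Nat.div_add_mod x 6
    have := Nat.mod_lt x (show 0 < 6 by norm_num)
    omega
  · have hφn := totient_six_mul_le (x / 6 + 1)
    have hcop : Nat.Coprime 2 (q ^ r) :=
      Nat.Coprime.pow_right r ((Nat.coprime_primes Nat.prime_two hq).mpr (by omega))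
    have hφx : Nat.totient x = q ^ (r - 1) * (q - 1) := by
      rw [hx, Nat.totient_mul hcop, Nat.totient_two, one_mul,
        Nat.totient_prime_pow hq (by omega)]
    rw [hφx]
    refine le_trans hφn ?_
    have hqr0 : q ^ r = q ^ (r - 1) * q := by
      conv_lhs => rw [show r = (r - 1) + 1 by omega]
      rw [pow_succ]
    have hpow0 : 1 ≤ q ^ (r - 1) := Nat.one_le_pow _ _ (by omega)
    have hx0 : x = 2 * (q ^ (r - 1) * q) := by rw [hx, hqr0]
    clear_value x
    generalize hgen : q ^ (r - 1) = p at *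
    have hpow : 1 ≤ p := hpow0
    have hB : p * (q - 1) + p = p * q := by
      rw [← Nat.mul_succ]; congr 1; omega
    have hC : p * (q - 3) + 3 * p = p * q := by
      have : p * (q - 3) + p * 3 = p * ((q - 3) + 3) := (Nat.mul_add p _ _).symm
      rw [show (q - 3) + 3 = q by omega] at this
      omega
    have h8 : 8 ≤ p * (q - 3) := by
      have := Nat.mul_le_mul hpow (show 8 ≤ q - 3 by omega)
      omega
    have hx2 : x = 2 * (p * q) := hx0
    have := Nat.div_add_mod x 6
    have := Nat.mod_lt x (show 0 < 6 by norm_num)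
    omega
end

section
/- For $r \geq 3$, the number $2 \cdot 3^r$ is not a sparsely totient number, since $20 \cdot 3^{r-2} > 2 \cdot 3^r$ and $\phi(20 \cdot 3^{r-2}) < \phi(2 \cdot 3^r)$. -/
theorem two_three_pow_not_sparsely_totient (r : ℕ) (hr : 3 ≤ r) :
    2 * 3 ^ r < 20 * 3 ^ (r - 2) ∧
    Nat.totient (20 * 3 ^ (r - 2)) < Nat.totient (2 * 3 ^ r) := by
  obtain ⟨s, rfl⟩ := Nat.exists_eq_add_of_le hr
  have hp : Nat.Prime 3 := by norm_num
  have h1 : (3 + s) - 2 = s + 1 := by omega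
  have e1 : Nat.totient (20 * 3 ^ (s + 1)) = 16 * 3 ^ s := by
    rw [Nat.totient_mul (by
      simpa using (Nat.Coprime.pow_right (s+1) (by norm_num : Nat.Coprime 20 3))),
      Nat.totient_prime_pow hp (Nat.succ_pos s)]
    have h20 : Nat.totient 20 = 8 := by decide
    rw [h20]
    simp [pow_succ]
    ring
  have e2 : Nat.totient (2 * 3 ^ (3 + s)) = 18 * 3 ^ s := by
    rw [Nat.totient_mul (by
      simpa using (Nat.Coprime.pow_right (3+s) (by norm_num : Nat.Coprime 2 3))),
      Nat.totient_prime_pow hp (by omega)]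
    have : 3 + s - 1 = s + 2 := by omega
    rw [this, Nat.totient_two]
    simp [pow_succ]
    ring
  rw [h1, e1, e2]
  constructor
  · have : 2 * 3 ^ (3 + s) = 54 * 3 ^ s := by rw [pow_add]; ring
    rw [this]
    have : 20 * 3 ^ (s + 1) = 60 * 3 ^ s := by rw [pow_succ]; ring
    rw [this]
    have := Nat.one_le_two_pow (n := s)
    nlinarith [Nat.one_le_two_pow (n := s), pow_pos (by norm_num : 0 < 3) s]
  · nlinarith [pow_pos (by norm_num : 0 < 3) s]
end

section
/- Let $x, y, k \geq 2$ with $k \leq \min\{x, y\}$, and let $a_i, b_i \geq 0$ ($1 \leq i \leq k$) satisfy $a_i + b_i \geq 1$ for all $i$. If $\sum a_i = t$ and $\sum b_i = u$, then $\sum_{i=1}^{k} x^{a_i} y^{b_i} \leq x^t y^u$. -/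
theorem sum_pow_mul_le (x y k : ℕ) (hx : 2 ≤ x) (hy : 2 ≤ y) (hk : 2 ≤ k)
    (hkxy : k ≤ min x y) (a b : Fin k → ℕ) (hab : ∀ i, 1 ≤ a i + b i)
    (t u : ℕ) (ht : ∑ i, a i = t) (hu : ∑ i, b i = u) :
    ∑ i, x ^ a i * y ^ b i ≤ x ^ t * y ^ u := by
  subst ht hu
  set f : Fin k → ℕ := fun i => x ^ a i * y ^ b i with hf
  have hkx : k ≤ x := le_trans hkxy (min_le_left _ _)
  have hky : k ≤ y := le_trans hkxy (min_le_right _ _)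
  have hfk : ∀ j, k ≤ f j := by
    intro j
    have := hab j
    rcases Nat.lt_or_ge (a j) 1 with h | h
    · have ha0 : a j = 0 := Nat.lt_one_iff.mp h
      have hb : 1 ≤ b j := by omega
      calc k ≤ y := hky
        _ = 1 * y ^ 1 := by ring
        _ ≤ x ^ a j * y ^ b j :=
          Nat.mul_le_mul (Nat.one_le_pow _ _ (by omega))
            (Nat.pow_le_pow_right (by omega) hb)
    · calc k ≤ x := hkx
        _ = x ^ 1 * 1 := by ring
        _ ≤ x ^ a j * y ^ b j :=
          Nat.mul_le_mul (Nat.pow_le_pow_right (by omega) h)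
            (Nat.one_le_pow _ _ (by omega))
  have hprod : x ^ (∑ i, a i) * y ^ (∑ i, b i) = ∏ j, f j := by
    rw [← Finset.prod_pow_eq_pow_sum, ← Finset.prod_pow_eq_pow_sum,
      ← Finset.prod_mul_distrib]
  have key : ∀ i : Fin k, k * f i ≤ ∏ j, f j := by
    intro i
    rw [← Finset.mul_prod_erase Finset.univ f (Finset.mem_univ i), mul_comm (f i)]
    apply Nat.mul_le_mul_right
    calc k = k ^ 1 := (pow_one k).symm
      _ ≤ k ^ ((Finset.univ.erase i).card) := by
        apply Nat.pow_le_pow_right (by omega)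
        rw [Finset.card_erase_of_mem (Finset.mem_univ i), Finset.card_univ,
          Fintype.card_fin]
        omega
      _ ≤ ∏ j ∈ Finset.univ.erase i, f j :=
        Finset.pow_card_le_prod _ _ _ (fun j _ => hfk j)
  have hsum : k * ∑ i, f i ≤ k * (x ^ (∑ i, a i) * y ^ (∑ i, b i)) := by
    rw [Finset.mul_sum, hprod]
    calc ∑ i, k * f i ≤ ∑ _i : Fin k, ∏ j, f j :=
          Finset.sum_le_sum (fun i _ => key i)
      _ = k * ∏ j, f j := by
        rw [Finset.sum_const, Finset.card_univ, Fintype.card_fin, smul_eq_mul]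
  exact Nat.le_of_mul_le_mul_left hsum (by omega)
end

section
/- Let $m$ be an odd positive integer and $u$ an odd integer with $\phi(u) = 4m$. Then $4m < u \leq 7m$. -/
theorem odd_totient_four_m_bounds (m u : ℕ) (hm : 0 < m) (hmodd : Odd m)
    (huodd : Odd u) (hφ : Nat.totient u = 4 * m) :
    4 * m < u ∧ u ≤ 7 * m := by
  have hu0 : u ≠ 0 := by rintro rfl; exact (Nat.not_odd_iff_even.mpr Even.zero) huodd
  have hu1 : 1 < u := by
    by_contra h
    push_neg at h
    interval_cases u <;> simp [Nat.totient] at hφ <;> omega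
  have hlow : 4 * m < u := hφ ▸ Nat.totient_lt u hu1
  refine ⟨hlow, ?_⟩
  have key := Nat.totient_mul_prod_primeFactors u
  rw [hφ] at key
  have hodd : ∀ p ∈ u.primeFactors, Odd p := by
    intro p hp
    have hpp := Nat.prime_of_mem_primeFactors hp
    have hpd := Nat.dvd_of_mem_primeFactors hp
    rcases hpp.eq_two_or_odd' with rfl | h
    · exact absurd huodd (Nat.not_odd_iff_even.mpr ((even_iff_two_dvd).mpr hpd))
    · exact h
  have hP : Odd (∏ p ∈ u.primeFactors, p) :=
    Finset.prod_induction _ Odd (fun _ _ => Odd.mul) ⟨0, rfl⟩ hodd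
  have h2 : (2 : ℕ) ^ u.primeFactors.card ∣ ∏ p ∈ u.primeFactors, (p - 1) := by
    rw [← Finset.prod_const]
    exact Finset.prod_dvd_prod_of_dvd _ _ (fun p hp => by
      have := hodd p hp
      obtain ⟨a, ha⟩ := this
      omega)
  have hcard : u.primeFactors.card ≤ 2 := by
    by_contra h
    push_neg at h
    have h8 : (8 : ℕ) ∣ ∏ p ∈ u.primeFactors, (p - 1) := by
      refine dvd_trans ?_ h2
      have : (2:ℕ) ^ 3 ∣ 2 ^ u.primeFactors.card := pow_dvd_pow 2 h
      simpa using this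
    obtain ⟨t, ht⟩ := h8
    rw [ht] at key
    have h8' : 4 * (m * ∏ p ∈ u.primeFactors, p) = 8 * (u * t) := by
      rw [← mul_assoc, key]; ring
    obtain ⟨z, hz⟩ := hmodd.mul hP
    rw [hz] at h8'
    omega
  interval_cases hc : u.primeFactors.card
  · rw [Finset.card_eq_zero, Nat.primeFactors_eq_empty] at hc
    omega
  · rw [Finset.card_eq_one] at hc
    obtain ⟨p, hp⟩ := hc
    rw [hp, Finset.prod_singleton, Finset.prod_singleton] at key
    have hpmem : p ∈ u.primeFactors := hp ▸ Finset.mem_singleton_self p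
    obtain ⟨a, ha⟩ := hodd p hpmem
    have hp2 := (Nat.prime_of_mem_primeFactors hpmem).two_le
    have ha1 : 1 ≤ a := by omega
    subst ha
    have heq : 4 * m * (2 * a + 1) = u * (2 * a) := by simpa using key
    have h3 : u * (2 * a) ≤ 7 * m * (2 * a) := by
      nlinarith [heq, mul_le_mul_of_nonneg_left ha1 (Nat.zero_le m)]
    exact Nat.le_of_mul_le_mul_right h3 (by omega)
  · rw [Finset.card_eq_two] at hc
    obtain ⟨p, q, hpq, hpqS⟩ := hc
    have hpmem : p ∈ u.primeFactors := hpqS ▸ Finset.mem_insert_self p {q}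
    have hqmem : q ∈ u.primeFactors :=
      hpqS ▸ Finset.mem_insert_of_mem (Finset.mem_singleton_self q)
    rw [hpqS, Finset.prod_pair hpq, Finset.prod_pair hpq] at key
    obtain ⟨a, ha⟩ := hodd p hpmem
    obtain ⟨b, hb⟩ := hodd q hqmem
    have hp2 := (Nat.prime_of_mem_primeFactors hpmem).two_le
    have hq2 := (Nat.prime_of_mem_primeFactors hqmem).two_le
    have ha1 : 1 ≤ a := by omega
    have hb1 : 1 ≤ b := by omega
    subst ha; subst hb
    have heq : 4 * m * ((2 * a + 1) * (2 * b + 1)) = u * (2 * a * (2 * b)) := by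
      simpa using key
    have heq2 : m * ((2 * a + 1) * (2 * b + 1)) = u * (a * b) := by nlinarith
    have hab : Odd (a * b) := by
      rcases Nat.even_or_odd (a * b) with he | ho
      · exfalso
        obtain ⟨t, ht⟩ := he
        obtain ⟨z, hz⟩ := hmodd.mul (⟨2 * (a * b) + a + b, by ring⟩ :
          Odd ((2 * a + 1) * (2 * b + 1)))
        have : m * ((2 * a + 1) * (2 * b + 1)) = 2 * (u * t) := by
          rw [heq2, ht]; ring
        omega
      · exact ho
    have haodd : Odd a := (Nat.odd_mul.mp hab).1
    have hbodd : Odd b := (Nat.odd_mul.mp hab).2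
    have hab' : a ≠ b := by intro h; apply hpq; omega
    have hmax : (1 ≤ a ∧ 3 ≤ b) ∨ (3 ≤ a ∧ 1 ≤ b) := by
      obtain ⟨x, hx⟩ := haodd
      obtain ⟨y, hy⟩ := hbodd
      omega
    have habpos : 0 < a * b := by positivity
    have hineq : 2 * a + 2 * b + 1 ≤ 3 * (a * b) := by
      rcases hmax with ⟨h1, h2⟩ | ⟨h1, h2⟩
      · obtain ⟨b', rfl⟩ : ∃ b', b = b' + 3 := ⟨b - 3, by omega⟩
        obtain ⟨a', rfl⟩ : ∃ a', a = a' + 1 := ⟨a - 1, by omega⟩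
        nlinarith
      · obtain ⟨b', rfl⟩ : ∃ b', b = b' + 1 := ⟨b - 1, by omega⟩
        obtain ⟨a', rfl⟩ : ∃ a', a = a' + 3 := ⟨a - 3, by omega⟩
        nlinarith
    have h3 : u * (a * b) ≤ 7 * m * (a * b) := by
      nlinarith [heq2, mul_le_mul_of_nonneg_left hineq (Nat.zero_le m)]
    exact Nat.le_of_mul_le_mul_right h3 habpos
end

section
/- Let $m \equiv 2 \pmod 4$, $m > 2$, be in the image of $\phi$. Then $m < N_3(m) \leq \frac{3m}{2}$ and $2m < N_2(m) \leq 3m$, where $N_2(m) = \max \phi^{-1}(m)$ and $N_3(m) = \min \phi^{-1}(m)$. -/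
/-- An odd number with totient ≡ 2 mod 4 (and > 2) is an odd prime power. -/
private lemma odd_pp (x : ℕ) (hodd : Odd x) (h2 : 2 < x.totient)
    (hmod : x.totient % 4 = 2) : ∃ p a, p.Prime ∧ 0 < a ∧ Odd p ∧ x = p ^ a := by
  have hx0 : x ≠ 0 := by rintro rfl; simp at h2
  have hx1 : x ≠ 1 := by rintro rfl; simp at h2
  have hpp : x.minFac.Prime := Nat.minFac_prime hx1
  set p := x.minFac with hp
  set a := x.factorization p with ha
  have hdvd : p ∣ x := Nat.minFac_dvd x
  have hapos : 0 < a := hpp.factorization_pos_of_dvd hx0 hdvd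
  obtain ⟨c, hxeq, hpc⟩ : ∃ c, p ^ a * c = x ∧ ¬ p ∣ c :=
    ⟨_, Nat.ordProj_mul_ordCompl_eq_self x p, Nat.not_dvd_ordCompl hpp hx0⟩
  have hpodd : Odd p := hodd.of_dvd_nat hdvd
  have hp3 : 3 ≤ p := by
    have := hpp.two_le
    rw [Nat.odd_iff] at hpodd; omega
  have hcd : c ∣ x := ⟨p ^ a, by rw [mul_comm]; exact hxeq.symm⟩
  have hcodd : Odd c := hodd.of_dvd_nat hcd
  rcases eq_or_ne c 1 with hc1 | hc1
  · exact ⟨p, a, hpp, hapos, hpodd, by rw [← hxeq, hc1, mul_one]⟩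
  · exfalso
    have hc3 : 2 < c := by
      have h0 : c ≠ 0 := fun h => hx0 (by rw [← hxeq, h, mul_zero])
      rw [Nat.odd_iff] at hcodd; omega
    have hcop : Nat.Coprime (p ^ a) c := (Nat.Prime.coprime_iff_not_dvd hpp).mpr hpc |>.pow_left _
    have htot : x.totient = (p ^ a).totient * c.totient := by
      rw [← hxeq, Nat.totient_mul hcop]
    have he1 : Even ((p ^ a).totient) := by
      apply Nat.totient_even
      calc 2 < p := hp3
      _ ≤ p ^ a := Nat.le_self_pow (by omega) p
    have he2 : Even (c.totient) := Nat.totient_even hc3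
    obtain ⟨u, hu⟩ := he1
    obtain ⟨v, hv⟩ := he2
    have : x.totient = 4 * (u * v) := by rw [htot, hu, hv]; ring
    omega

/-- Key bound for odd x: 2x ≤ 3·φ(x). -/
private lemma odd_bound (x : ℕ) (hodd : Odd x) (h2 : 2 < x.totient)
    (hmod : x.totient % 4 = 2) : 2 * x ≤ 3 * x.totient := by
  obtain ⟨p, a, hpp, hapos, hpodd, rfl⟩ := odd_pp x hodd h2 hmod
  have hp3 : 3 ≤ p := by
    rcases hpp.two_le.lt_or_eq with h | h
    · omega
    · exfalso; rw [Nat.odd_iff, ← h] at hpodd; omega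
  rw [Nat.totient_prime_pow hpp hapos]
  have hxe : p ^ a = p * p ^ (a - 1) := by
    conv_lhs => rw [show a = 1 + (a - 1) by omega]
    rw [pow_add, pow_one]
  rw [hxe]
  have h1 : 2 * p ≤ 3 * (p - 1) := by omega
  calc 2 * (p * p ^ (a - 1)) = (2 * p) * p ^ (a - 1) := by ring
    _ ≤ (3 * (p - 1)) * p ^ (a - 1) := Nat.mul_le_mul_right _ h1
    _ = 3 * (p ^ (a - 1) * (p - 1)) := by ring

/-- Even x with totient ≡ 2 mod 4 is twice an odd number with the same totient. -/
private lemma even_struct (x : ℕ) (heven : ¬ Odd x) (h2 : 2 < x.totient)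
    (hmod : x.totient % 4 = 2) : ∃ y, Odd y ∧ x = 2 * y ∧ y.totient = x.totient := by
  have hx0 : x ≠ 0 := by rintro rfl; simp at h2
  have hdvd : (2 : ℕ) ∣ x := by rw [Nat.odd_iff] at heven; omega
  have h2p : Nat.Prime 2 := Nat.prime_two
  set a := x.factorization 2 with ha
  have hapos : 0 < a := h2p.factorization_pos_of_dvd hx0 hdvd
  obtain ⟨y, hxeq, h2y⟩ : ∃ y, 2 ^ a * y = x ∧ ¬ 2 ∣ y :=
    ⟨_, Nat.ordProj_mul_ordCompl_eq_self x 2, Nat.not_dvd_ordCompl h2p hx0⟩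
  have hyodd : Odd y := Nat.odd_iff.mpr (by omega)
  have hcop : Nat.Coprime (2 ^ a) y := (Nat.Prime.coprime_iff_not_dvd h2p).mpr h2y |>.pow_left _
  have htot : x.totient = (2 ^ a).totient * y.totient := by
    rw [← hxeq, Nat.totient_mul hcop]
  have ha1 : a = 1 := by
    by_contra hne
    have ha2 : 2 ≤ a := by omega
    have he1 : Even ((2 ^ a).totient) := by
      apply Nat.totient_even
      calc 2 < 2 ^ 2 := by norm_num
      _ ≤ 2 ^ a := Nat.pow_le_pow_right (by norm_num) ha2
    have htp : (2 ^ a).totient = 2 ^ (a - 1) := by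
      rw [Nat.totient_prime_pow Nat.prime_two hapos]; simp
    rcases eq_or_ne y 1 with hy1 | hy1
    · rw [hy1, Nat.totient_one, mul_one, htp] at htot
      rcases eq_or_ne a 2 with ha2 | ha2
      · rw [ha2] at htot; omega
      · have h4 : (4 : ℕ) ∣ 2 ^ (a - 1) := by
          have : (2 : ℕ) ^ 2 ∣ 2 ^ (a - 1) := pow_dvd_pow 2 (by omega)
          simpa using this
        omega
    · have hy3 : 2 < y := by
        have h0 : y ≠ 0 := fun h => hx0 (by rw [← hxeq, h, mul_zero])
        have h2' : y ≠ 2 := by intro h; apply h2y; rw [h]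
        omega
      have he2 : Even (y.totient) := Nat.totient_even hy3
      obtain ⟨u, hu⟩ := he1
      obtain ⟨v, hv⟩ := he2
      have : x.totient = 4 * (u * v) := by rw [htot, hu, hv]; ring
      omega
  refine ⟨y, hyodd, ?_, ?_⟩
  · rw [← hxeq, ha1, pow_one]
  · rw [htot, ha1, pow_one, Nat.totient_two, one_mul]

theorem N2_N3_bounds_two_mod_four (m : ℕ) (hm : 2 < m) (hmod : m % 4 = 2)
    (hV : ∃ x : ℕ, Nat.totient x = m) :
    m < sInf {x : ℕ | Nat.totient x = m} ∧
    2 * sInf {x : ℕ | Nat.totient x = m} ≤ 3 * m ∧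
    2 * m < sSup {x : ℕ | Nat.totient x = m} ∧
    sSup {x : ℕ | Nat.totient x = m} ≤ 3 * m := by
  set S := {x : ℕ | Nat.totient x = m} with hS
  have hne : S.Nonempty := hV
  -- every element of S exceeds m
  have hgt : ∀ x ∈ S, m < x := by
    intro x hx
    have hx' : x.totient = m := hx
    have hx1 : 1 < x := by
      by_contra h
      have hx2 : x = 0 ∨ x = 1 := by omega
      rcases hx2 with rfl | rfl <;> simp [Nat.totient] at hx' <;> omega
    calc m = x.totient := hx'.symm
    _ < x := Nat.totient_lt x hx1
  -- every element of S is ≤ 3m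
  have hle : ∀ x ∈ S, x ≤ 3 * m := by
    intro x hx
    have hx' : x.totient = m := hx
    by_cases hodd : Odd x
    · have := odd_bound x hodd (hx' ▸ hm) (hx' ▸ hmod)
      omega
    · obtain ⟨y, hyodd, hxy, hyt⟩ := even_struct x hodd (hx' ▸ hm) (hx' ▸ hmod)
      have := odd_bound y hyodd (by omega) (by omega)
      omega
  have hbdd : BddAbove S := ⟨3 * m, fun x hx => hle x hx⟩
  have hinf_mem : sInf S ∈ S := Nat.sInf_mem hne
  -- sInf S is odd
  have hinf_odd : Odd (sInf S) := by
    by_contra h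
    obtain ⟨y, hyodd, hxy, hyt⟩ := even_struct (sInf S) h
      ((hinf_mem : Nat.totient (sInf S) = m) ▸ hm)
      ((hinf_mem : Nat.totient (sInf S) = m) ▸ hmod)
    have hymem : y ∈ S := by rw [hS, Set.mem_setOf_eq]; rw [hyt]; exact hinf_mem
    have := Nat.sInf_le hymem
    have hy1 : 1 ≤ y := hyodd.pos
    omega
  have hinf_tot : (sInf S).totient = m := hinf_mem
  refine ⟨hgt _ hinf_mem, ?_, ?_, ?_⟩
  · have := odd_bound (sInf S) hinf_odd (hinf_tot ▸ hm) (hinf_tot ▸ hmod)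
    omega
  · -- 2 * sInf S ∈ S and exceeds 2m
    have hmem2 : 2 * sInf S ∈ S := by
      rw [hS, Set.mem_setOf_eq,
        Nat.totient_mul (Nat.coprime_two_left.mpr hinf_odd), Nat.totient_two, one_mul]
      exact hinf_tot
    have h1 := le_csSup hbdd hmem2
    have h2 := hgt _ hinf_mem
    omega
  · exact csSup_le hne hle
end

section
/- Let $m \equiv 2 \pmod 4$, $m > 2$, be in the image of $\phi$. Then $2 \leq \frac{N_2(m)}{N_3(m)} \leq 3$, where $N_2(m) = \max \phi^{-1}(m)$ and $N_3(m) = \min \phi^{-1}(m)$. -/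
/-! If `φ n ≡ 2 (mod 4)` then `n` is not a product of two coprime factors `> 2`, since each
contributes an even factor to `φ n`; and `4 ∤ n` unless `n = 4`, since `φ (4k) = 2 φ (2k)`. So
every solution of `φ x = m` is an odd prime power `p ^ (k + 1)` or its double, both with totient
`p ^ k (p - 1)`, and `p ≥ 3` puts every solution in `(m, 3m]`. The least solution is odd (halving an
even one gives a smaller solution), so its double is a solution too. -/

namespace Nat

open scoped Nat

theorem four_dvd_totient_mul {a b : ℕ} (hab : a.Coprime b) (ha : 2 < a) (hb : 2 < b) :
    4 ∣ φ (a * b) := by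
  rw [totient_mul hab]
  exact mul_dvd_mul (totient_even ha).two_dvd (totient_even hb).two_dvd

theorem not_four_dvd_of_totient_mod_four {n : ℕ} (h : φ n % 4 = 2) (h2 : 2 < φ n) :
    ¬ 4 ∣ n := by
  rintro ⟨k, rfl⟩
  have hφ : φ (4 * k) = 2 * φ (2 * k) := by
    rw [show 4 * k = 2 * (2 * k) by ring, totient_two_mul_of_even (even_two_mul k)]
  have hk : 2 * k ≤ 2 := by
    by_contra! hk
    obtain ⟨u, hu⟩ := totient_even hk
    omega
  obtain rfl | rfl : k = 0 ∨ k = 1 := by omega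
  all_goals simp_all

theorem exists_odd_eq_two_mul_of_totient_mod_four {n : ℕ} (hn : Even n) (h : φ n % 4 = 2)
    (h2 : 2 < φ n) : ∃ k, Odd k ∧ n = 2 * k := by
  obtain ⟨k, rfl⟩ := hn
  refine ⟨k, ?_, (two_mul k).symm⟩
  rcases k.even_or_odd with ⟨j, rfl⟩ | hk
  · exact absurd ⟨j, by ring⟩ (not_four_dvd_of_totient_mod_four h h2)
  · exact hk

theorem exists_prime_pow_of_odd_of_totient_mod_four {n : ℕ} (hn : Odd n) (h : φ n % 4 = 2) :
    ∃ p k, p.Prime ∧ p ≠ 2 ∧ n = p ^ (k + 1) := by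
  have hn1 : n ≠ 1 := by rintro rfl; simp at h
  obtain ⟨p, hp, hpn⟩ := exists_prime_and_dvd hn1
  have hp2 : p ≠ 2 := fun hp2 => hn.not_two_dvd_nat (hp2 ▸ hpn)
  obtain ⟨e, t, hpt, rfl⟩ := exists_eq_pow_mul_and_not_dvd hn.pos.ne' p hp.ne_one
  have he : e ≠ 0 := by
    rintro rfl
    exact hpt (by simpa using hpn)
  have ht : t = 1 := by
    by_contra ht
    have ht3 : 2 < t := by
      obtain ⟨j, rfl⟩ := Odd.of_mul_right hn
      omega
    have hpe : 2 < p ^ e := (hp.two_le.lt_of_ne' hp2).trans_le (le_self_pow he p)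
    have hcop : (p ^ e).Coprime t := (hp.coprime_iff_not_dvd.mpr hpt).pow_left e
    have := four_dvd_totient_mul hcop hpe ht3
    omega
  exact ⟨p, e - 1, hp, hp2, by rw [ht, mul_one, Nat.sub_add_cancel (pos_of_ne_zero he)]⟩

theorem two_mul_prime_pow_le_three_mul_totient {p : ℕ} (hp : p.Prime) (hp2 : p ≠ 2) (k : ℕ) :
    2 * p ^ (k + 1) ≤ 3 * φ (p ^ (k + 1)) := by
  have hp3 : 3 ≤ p := by have := hp.two_le; omega
  rw [totient_prime_pow_succ hp, pow_succ]
  calc 2 * (p ^ k * p) = p ^ k * (2 * p) := by ring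
    _ ≤ p ^ k * (3 * (p - 1)) := Nat.mul_le_mul_left _ (by omega)
    _ = 3 * (p ^ k * (p - 1)) := by ring

theorem two_mul_le_three_mul_totient_of_odd {n : ℕ} (hn : Odd n) (h : φ n % 4 = 2) :
    2 * n ≤ 3 * φ n := by
  obtain ⟨p, k, hp, hp2, rfl⟩ := exists_prime_pow_of_odd_of_totient_mod_four hn h
  exact two_mul_prime_pow_le_three_mul_totient hp hp2 k

theorem le_three_mul_totient_of_totient_mod_four {n : ℕ} (h : φ n % 4 = 2) (h2 : 2 < φ n) :
    n ≤ 3 * φ n := by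
  rcases n.even_or_odd with hn | hn
  · obtain ⟨k, hk, rfl⟩ := exists_odd_eq_two_mul_of_totient_mod_four hn h h2
    rw [totient_two_mul_of_odd hk] at h ⊢
    exact two_mul_le_three_mul_totient_of_odd hk h
  · have := two_mul_le_three_mul_totient_of_odd hn h
    omega

end Nat

open scoped Nat in
theorem N2_div_N3_bounds (m : ℕ) (hm : 2 < m) (hmod : m % 4 = 2)
    (hV : ∃ x : ℕ, Nat.totient x = m) :
    2 * sInf {x : ℕ | Nat.totient x = m} ≤ sSup {x : ℕ | Nat.totient x = m} ∧
    sSup {x : ℕ | Nat.totient x = m} ≤ 3 * sInf {x : ℕ | Nat.totient x = m} := by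
  set S := {x : ℕ | φ x = m}
  have hbdd : BddAbove S := ⟨3 * m, fun x (hx : φ x = m) =>
    hx ▸ Nat.le_three_mul_totient_of_totient_mod_four (hx ▸ hmod) (hx ▸ hm)⟩
  have hInf : φ (sInf S) = m := Nat.sInf_mem hV
  have hSup : φ (sSup S) = m := Nat.sSup_mem hV hbdd
  have hm_lt : m < sInf S :=
    hInf ▸ Nat.totient_lt _ (by have := Nat.totient_le (sInf S); omega)
  have hInf_odd : Odd (sInf S) := by
    rcases (sInf S).even_or_odd with he | ho
    · obtain ⟨k, hk, hkS⟩ :=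
        Nat.exists_odd_eq_two_mul_of_totient_mod_four he (hInf ▸ hmod) (hInf ▸ hm)
      have : sInf S ≤ k := Nat.sInf_le (show φ k = m by rw [← hInf, hkS, Nat.totient_two_mul_of_odd hk])
      omega
    · exact ho
  constructor
  · exact le_csSup hbdd (show φ (2 * sInf S) = m by rw [Nat.totient_two_mul_of_odd hInf_odd, hInf])
  · have := Nat.le_three_mul_totient_of_totient_mod_four (hSup ▸ hmod) (hSup ▸ hm)
    omega
end

section
/- The series $\sum_{p \text{ prime}, p \equiv 3 \pmod 4} \frac{1}{p}$ diverges. -/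
/-!
Since `χ₄ p + 2 • [p ≡ 3 mod 4] + [p = 2] = 1` for every prime `p`, for `x > 1`
`∑ p ^ (-x) = ∑ χ₄ p * p ^ (-x) + 2 ∑_{p ≡ 3} p ^ (-x) + 2 ^ (-x)`.
By the Euler product, `∑ χ₄ p * p ^ (-x)` differs from `log |L(χ₄, x)|` by at most `∑ 1 / p²`,
and `log |L(χ₄, x)|` stays bounded as `x → 1⁺` because `L(χ₄, 1) ≠ 0`. If `∑_{p ≡ 3} 1 / p` were
finite, `∑ p ^ (-x)` would thus stay bounded as `x → 1⁺`, contradicting `∑ 1 / p = ∞`.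
-/

open Complex Set Filter Topology

lemma Complex.norm_neg_log_one_sub_sub_self_le {z : ℂ} (hz : ‖z‖ ≤ 1 / 2) :
    ‖-log (1 - z) - z‖ ≤ ‖z‖ ^ 2 := by
  have hz' : ‖-z‖ < 1 := by rw [norm_neg]; linarith
  have hinv : (1 - ‖z‖)⁻¹ ≤ 2 := by
    rw [inv_le_comm₀ (by linarith) two_pos]; linarith
  calc ‖-log (1 - z) - z‖ = ‖log (1 + -z) - -z‖ := by
        rw [← norm_neg]; congr 1; ring_nf
    _ ≤ ‖z‖ ^ 2 * (1 - ‖z‖)⁻¹ / 2 := by simpa using norm_log_one_add_sub_self_le hz'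
    _ ≤ ‖z‖ ^ 2 * 2 / 2 := by gcongr
    _ = ‖z‖ ^ 2 := by ring

lemma Nat.Primes.rpow_neg_le_inv (p : Nat.Primes) {x : ℝ} (hx : 1 ≤ x) :
    (p : ℝ) ^ (-x) ≤ (p : ℝ)⁻¹ := by
  rw [← Real.rpow_neg_one]
  exact Real.rpow_le_rpow_of_exponent_le (mod_cast p.2.one_lt.le) (by linarith)

lemma Nat.Primes.summable_inv_sq : Summable fun p : Nat.Primes ↦ ((p : ℝ)⁻¹) ^ 2 := by
  refine (Nat.Primes.summable_rpow.mpr (by norm_num : (-2 : ℝ) < -1)).congr fun p ↦ ?_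
  rw [inv_pow, ← Real.rpow_natCast, ← Real.rpow_neg (by positivity)]
  norm_num

namespace DirichletCharacter

variable {N : ℕ} (χ : DirichletCharacter ℂ N)

lemma norm_apply_mul_prime_cpow_le (p : Nat.Primes) (s : ℂ) :
    ‖χ p * (p : ℂ) ^ (-s)‖ ≤ (p : ℝ) ^ (-s.re) := by
  rw [norm_mul, norm_natCast_cpow_of_pos p.2.pos, neg_re]
  exact mul_le_of_le_one_left (by positivity) (χ.norm_le_one _)

lemma re_tsum_neg_log_one_sub_mul_prime_cpow [NeZero N] {s : ℂ} (hs : 1 < s.re) :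
    (∑' p : Nat.Primes, -log (1 - χ p * (p : ℂ) ^ (-s))).re = Real.log ‖LFunction χ s‖ := by
  rw [LFunction_eq_LSeries χ hs, ← LSeries_eulerProduct_exp_log χ hs, norm_exp, Real.log_exp]

lemma norm_tsum_mul_prime_cpow_sub_tsum_neg_log_le {s : ℂ} (hs : 1 < s.re) :
    ‖∑' p : Nat.Primes, χ p * (p : ℂ) ^ (-s) -
        ∑' p : Nat.Primes, -log (1 - χ p * (p : ℂ) ^ (-s))‖ ≤
      ∑' p : Nat.Primes, ((p : ℝ)⁻¹) ^ 2 := by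
  set z : Nat.Primes → ℂ := fun p ↦ χ p * (p : ℂ) ^ (-s)
  have hz (p : Nat.Primes) : ‖z p‖ ≤ (p : ℝ)⁻¹ :=
    (χ.norm_apply_mul_prime_cpow_le p s).trans (Nat.Primes.rpow_neg_le_inv p hs.le)
  have hz_half (p : Nat.Primes) : ‖z p‖ ≤ 1 / 2 :=
    (hz p).trans (by rw [one_div]; exact inv_anti₀ two_pos (mod_cast p.2.two_le))
  have hterm (p : Nat.Primes) : ‖z p - -log (1 - z p)‖ ≤ ((p : ℝ)⁻¹) ^ 2 := by
    rw [norm_sub_rev]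
    exact (norm_neg_log_one_sub_sub_self_le (hz_half p)).trans (by gcongr; exact hz p)
  have hsum_z : Summable z :=
    .of_norm_bounded (Nat.Primes.summable_rpow.mpr (neg_lt_neg hs))
      (χ.norm_apply_mul_prime_cpow_le · s)
  have hsum_norm : Summable fun p ↦ ‖z p - -log (1 - z p)‖ :=
    .of_nonneg_of_le (fun _ ↦ norm_nonneg _) hterm Nat.Primes.summable_inv_sq
  rw [← hsum_z.tsum_sub (χ.summable_neg_log_one_sub_mul_prime_cpow hs)]
  exact (norm_tsum_le_tsum_norm hsum_norm).trans
    (hsum_norm.tsum_le_tsum hterm Nat.Primes.summable_inv_sq)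

lemma exists_log_norm_LFunction_le [NeZero N] (hχ : χ ≠ 1) :
    ∃ C, ∀ x ∈ Icc (1 : ℝ) 2, Real.log ‖LFunction χ x‖ ≤ C := by
  have hcont : ContinuousOn (fun x : ℝ ↦ Real.log ‖LFunction χ x‖) (Icc 1 2) := by
    refine ContinuousOn.log ?_ fun x hx ↦ ?_
    · exact ((differentiable_LFunction hχ).continuous.comp continuous_ofReal).norm.continuousOn
    · exact norm_ne_zero_iff.mpr <| LFunction_ne_zero_of_one_le_re χ (.inl hχ) (by simpa using hx.1)
  obtain ⟨C, hC⟩ := isCompact_Icc.bddAbove_image hcont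
  exact ⟨C, fun x hx ↦ hC (mem_image_of_mem _ hx)⟩

lemma exists_re_tsum_mul_prime_cpow_le [NeZero N] (hχ : χ ≠ 1) :
    ∃ C, ∀ x ∈ Ioc (1 : ℝ) 2, (∑' p : Nat.Primes, χ p * (p : ℂ) ^ (-(x : ℂ))).re ≤ C := by
  obtain ⟨C, hC⟩ := χ.exists_log_norm_LFunction_le hχ
  refine ⟨C + ∑' p : Nat.Primes, ((p : ℝ)⁻¹) ^ 2, fun x hx ↦ ?_⟩
  have hx' : 1 < (x : ℂ).re := by simpa using hx.1
  have herr := χ.norm_tsum_mul_prime_cpow_sub_tsum_neg_log_le hx'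
  have hlog := χ.re_tsum_neg_log_one_sub_mul_prime_cpow hx'
  have hre := (re_le_norm _).trans herr
  rw [sub_re, hlog] at hre
  linarith [hC x (Ioc_subset_Icc_self hx)]

end DirichletCharacter

lemma ZMod.χ₄_nat_add_two_mul_ite_add_ite (n : ℕ) :
    χ₄ n + 2 * (if n % 4 = 3 then 1 else 0) + (if 2 ∣ n then 1 else 0) = 1 := by
  rw [χ₄_nat_mod_four]
  have h2 : 2 ∣ n ↔ n % 4 = 0 ∨ n % 4 = 2 := by omega
  have h4 : n % 4 < 4 := Nat.mod_lt n (by norm_num)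
  simp only [h2]
  interval_cases n % 4 <;> decide

noncomputable def χ₄ℂ : DirichletCharacter ℂ 4 := ZMod.χ₄.ringHomComp (Int.castRingHom ℂ)

lemma χ₄ℂ_apply (n : ℕ) : χ₄ℂ n = (ZMod.χ₄ n : ℂ) := rfl

lemma χ₄ℂ_ne_one : χ₄ℂ ≠ 1 := by
  intro h
  have h3 := congrArg (· (3 : ℕ)) h
  simp only [χ₄ℂ_apply, ZMod.χ₄_nat_three_mod_four (by norm_num : 3 % 4 = 3)] at h3
  rw [MulChar.one_apply (by decide)] at h3
  norm_num at h3

lemma re_χ₄ℂ_mul_cpow (n : ℕ) (x : ℝ) :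
    (χ₄ℂ n * (n : ℂ) ^ (-(x : ℂ))).re = ZMod.χ₄ n * (n : ℝ) ^ (-x) := by
  rw [χ₄ℂ_apply, show ((n : ℂ)) = ((n : ℝ) : ℂ) by simp, ← ofReal_neg,
    ← ofReal_cpow (Nat.cast_nonneg n)]
  simp

lemma tsum_prime_rpow_neg_le_of_summable_three_mod_four {x : ℝ} (hx : 1 < x)
    (hS : Summable fun p : Nat.Primes ↦ if (p : ℕ) % 4 = 3 then (p : ℝ)⁻¹ else 0) :
    ∑' p : Nat.Primes, (p : ℝ) ^ (-x) ≤
      (∑' p : Nat.Primes, χ₄ℂ p * (p : ℂ) ^ (-(x : ℂ))).re +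
        2 * ∑' p : Nat.Primes, (if (p : ℕ) % 4 = 3 then (p : ℝ)⁻¹ else 0) + 1 := by
  have hsum_re : Summable fun p : Nat.Primes ↦ χ₄ℂ p * (p : ℂ) ^ (-(x : ℂ)) :=
    .of_norm_bounded (Nat.Primes.summable_rpow.mpr (by simpa using hx))
      (χ₄ℂ.norm_apply_mul_prime_cpow_le · x)
  have htwo : HasSum (fun p : Nat.Primes ↦ if (p : ℕ) = 2 then (1 : ℝ) else 0) 1 := by
    simpa using hasSum_single (f := fun p : Nat.Primes ↦ if (p : ℕ) = 2 then (1 : ℝ) else 0)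
      ⟨2, Nat.prime_two⟩ fun p hp ↦ if_neg fun h ↦ hp (Subtype.ext h)
  refine hasSum_le (fun p ↦ ?_) (Nat.Primes.summable_rpow.mpr (by linarith)).hasSum
    (((hasSum_re hsum_re.hasSum).add (hS.hasSum.mul_left 2)).add htwo)
  have hid := congrArg (fun k : ℤ ↦ (k : ℝ) * (p : ℝ) ^ (-x))
    (ZMod.χ₄_nat_add_two_mul_ite_add_ite p)
  have hp := Nat.Primes.rpow_neg_le_inv p hx.le
  have hp1 : (p : ℝ)⁻¹ ≤ 1 := inv_le_one_of_one_le₀ (mod_cast p.2.one_le)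
  have hp2 : 2 ∣ (p : ℕ) ↔ (p : ℕ) = 2 := by
    rw [Nat.prime_dvd_prime_iff_eq Nat.prime_two p.2, eq_comm]
  have hpos : 0 ≤ (p : ℝ) ^ (-x) := by positivity
  simp only [re_χ₄ℂ_mul_cpow, hp2] at hid ⊢
  split_ifs at hid ⊢ <;> push_cast at hid <;> linarith

lemma summable_inv_of_eventually_sum_rpow_neg_le {ι : Type*} {a : ι → ℝ} (ha : ∀ i, 0 < a i)
    {M : ℝ} (h : ∀ᶠ x in 𝓝[>] (1 : ℝ), ∀ F : Finset ι, ∑ i ∈ F, a i ^ (-x) ≤ M) :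
    Summable fun i ↦ (a i)⁻¹ := by
  refine summable_of_sum_le (c := M) (fun i ↦ (inv_pos.mpr (ha i)).le) fun F ↦ ?_
  have hlim : Tendsto (fun x : ℝ ↦ ∑ i ∈ F, a i ^ (-x)) (𝓝[>] 1) (𝓝 (∑ i ∈ F, (a i)⁻¹)) := by
    refine tendsto_finsetSum F fun i _ ↦ ?_
    have hcont : Continuous fun x : ℝ ↦ a i ^ (-x) :=
      continuous_const.rpow continuous_neg fun _ ↦ .inl (ha i).ne'
    simpa [Real.rpow_neg_one] using (hcont.tendsto 1).mono_left nhdsWithin_le_nhds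
  exact le_of_tendsto hlim (h.mono fun x hx ↦ hx F)

theorem sum_reciprocals_primes_three_mod_four_diverges :
    ¬ Summable (Set.indicator {p : ℕ | p.Prime ∧ p % 4 = 3} (fun p => (1 : ℝ) / p)) := by
  intro h
  have hS : Summable fun p : Nat.Primes ↦ if (p : ℕ) % 4 = 3 then (p : ℝ)⁻¹ else 0 :=
    (h.comp_injective Subtype.val_injective).congr fun p ↦ by
      simp [Set.indicator_apply, p.2]
  obtain ⟨C, hC⟩ := χ₄ℂ.exists_re_tsum_mul_prime_cpow_le χ₄ℂ_ne_one
  refine Nat.Primes.not_summable_one_div ?_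
  simp only [one_div]
  set S := ∑' p : Nat.Primes, (if (p : ℕ) % 4 = 3 then (p : ℝ)⁻¹ else 0)
  refine summable_inv_of_eventually_sum_rpow_neg_le (M := C + 2 * S + 1)
    (fun p ↦ mod_cast p.2.pos) ?_
  filter_upwards [Ioc_mem_nhdsGT one_lt_two] with x hx F
  calc ∑ p ∈ F, (p : ℝ) ^ (-x)
      ≤ ∑' p : Nat.Primes, (p : ℝ) ^ (-x) :=
        Summable.sum_le_tsum F (fun _ _ ↦ by positivity)
          (Nat.Primes.summable_rpow.mpr (by linarith [hx.1]))
    _ ≤ C + 2 * S + 1 := by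
        linarith [tsum_prime_rpow_neg_le_of_summable_three_mod_four hx.1 hS, hC x hx]
end
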